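/- The inverse function m is three times differentiable on the open interval (g(Δ₁), g(Δ₂)), and there exist constants 0 < c₁ ≤ c₂ depending only on c and θ such that for every x ≥ 2 and every t in this interval, c₁·t^{γ−3} ≤ |m‴(t)| ≤ c₂·t^{γ−3}. -/

import Mathlib

open Real

/-- `Δ₁ = exp(π·⌊(log x)/π⌋ + arctan 1)` -/
noncomputable def Δ₁ (x : ℝ) : ℝ :=
  Real.exp (Real.pi * (⌊Real.log x / Real.pi⌋ : ℝ) + Real.arctan 1)

/-- `Δ₂ = exp(π·⌊(log x)/π⌋ + arctan 2)` -/
noncomputable def Δ₂ (x : ℝ) : ℝ :=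
  Real.exp (Real.pi * (⌊Real.log x / Real.pi⌋ : ℝ) + Real.arctan 2)

/-- `g(y) = y^c · (tan(log y))^θ` (real powers). -/
noncomputable def g (c θ y : ℝ) : ℝ := y ^ c * Real.tan (Real.log y) ^ θ

/-!
With `T = tan (log y)` one has `dT/dy = (1 + T²) / y`, so the `k`-th derivative of `g` is
`y ^ (c - k) * T ^ θ * gₖ T` for explicit rational functions `gₖ`. The third derivative of the
inverse is `(3 g''² - g' g''') / g'⁵`; substituting `t = g y` rewrites it as
`thirdDerivRatio c θ T * t ^ (1 / c - 3)`. Since `T` ranges over `[1, 2]` whatever `x` is, the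
constants are the extrema of the continuous function `thirdDerivRatio c θ` on `[1, 2]`. It is
positive because, with `a = g₁ T ≥ 1 + 2θ`, `s₁ = T² - T⁻²` and `s₂ = (1 + T²)(2T + 2T⁻³)`,
its numerator is `a (a (a - 1) (2a - 1) - θ s₂) + 3θ s₁ g₂ T`.
-/

open Set Filter

theorem StrictMonoOn.continuousAt_of_rightInvOn {α β : Type*} [LinearOrder α] [TopologicalSpace α]
    [OrderTopology α] [DenselyOrdered α] [LinearOrder β] [TopologicalSpace β] [OrderTopology β]
    {f : α → β} {m : β → α} {a b : α} {t : β}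
    (hf : StrictMonoOn f (Icc a b)) (hmaps : MapsTo m (Icc (f a) (f b)) (Icc a b))
    (hinv : RightInvOn m f (Icc (f a) (f b))) (ht : t ∈ Ioo (f a) (f b)) :
    ContinuousAt m t := by
  have hmono : MonotoneOn m (Icc (f a) (f b)) := fun s hs s' hs' hss' =>
    (hf.le_iff_le (hmaps hs) (hmaps hs')).1 (by rwa [hinv hs, hinv hs'])
  have hsurj : Icc a b ⊆ m '' Icc (f a) (f b) := fun y hy =>
    have hfy : f y ∈ Icc (f a) (f b) :=
      ⟨hf.monotoneOn (left_mem_Icc.2 (hy.1.trans hy.2)) hy hy.1,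
        hf.monotoneOn hy (right_mem_Icc.2 (hy.1.trans hy.2)) hy.2⟩
    ⟨f y, hfy, hf.injOn (hmaps hfy) hy (hinv hfy)⟩
  have htm := hmaps (Ioo_subset_Icc_self ht)
  have hmt : m t ∈ Ioo a b :=
    ⟨htm.1.lt_of_ne fun h => ht.1.ne' (by rw [h, hinv (Ioo_subset_Icc_self ht)]),
      htm.2.lt_of_ne fun h => ht.2.ne (by rw [← h, hinv (Ioo_subset_Icc_self ht)])⟩
  exact continuousAt_of_monotoneOn_of_image_mem_nhds hmono (Icc_mem_nhds ht.1 ht.2)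
    (mem_of_superset (Icc_mem_nhds hmt.1 hmt.2) hsurj)

theorem hasDerivAt_deriv_deriv_of_rightInvOn {f f₁ f₂ f₃ m : ℝ → ℝ} {U : Set ℝ} (hU : IsOpen U)
    (hm : ∀ t ∈ U, ContinuousAt m t) (hinv : RightInvOn m f U)
    (hf : ∀ t ∈ U, HasDerivAt f (f₁ (m t)) (m t)) (hf₁ : ∀ t ∈ U, HasDerivAt f₁ (f₂ (m t)) (m t))
    (hf₂ : ∀ t ∈ U, HasDerivAt f₂ (f₃ (m t)) (m t)) (h₀ : ∀ t ∈ U, f₁ (m t) ≠ 0) {t : ℝ}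
    (ht : t ∈ U) :
    HasDerivAt m (f₁ (m t))⁻¹ t ∧ HasDerivAt (deriv m) (-f₂ (m t) / f₁ (m t) ^ 3) t ∧
      HasDerivAt (deriv (deriv m)) ((3 * f₂ (m t) ^ 2 - f₁ (m t) * f₃ (m t)) / f₁ (m t) ^ 5) t := by
  have d₁ : ∀ z ∈ U, HasDerivAt m (f₁ (m z))⁻¹ z := fun z hz =>
    (hf z hz).of_local_left_inverse (hm z hz) (h₀ z hz) (eventually_of_mem (hU.mem_nhds hz) hinv)
  have d₂ : ∀ z ∈ U, HasDerivAt (deriv m) (-f₂ (m z) / f₁ (m z) ^ 3) z := fun z hz => by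
    have h := ((hf₁ z hz).comp z (d₁ z hz)).inv (h₀ z hz)
    refine (h.congr_of_eventuallyEq (eventually_of_mem (hU.mem_nhds hz)
      fun w hw => (d₁ w hw).deriv)).congr_deriv ?_
    have := h₀ z hz
    simp only [Function.comp_apply]
    field_simp
  refine ⟨d₁ t ht, d₂ t ht, ?_⟩
  have h := (((hf₂ t ht).comp t (d₁ t ht)).neg).div (((hf₁ t ht).comp t (d₁ t ht)).pow 3)
    (pow_ne_zero _ (h₀ t ht))
  refine (h.congr_of_eventuallyEq (eventually_of_mem (hU.mem_nhds ht)
    fun w hw => (d₂ w hw).deriv)).congr_deriv ?_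
  have := h₀ t ht
  simp only [Function.comp_apply, Pi.neg_apply, Pi.pow_apply]
  field_simp
  ring

theorem IsCompact.exists_pos_bounds {α : Type*} [TopologicalSpace α] {f : α → ℝ} {s : Set α}
    (hs : IsCompact s) (hne : s.Nonempty) (hf : ContinuousOn f s) (hpos : ∀ v ∈ s, 0 < f v) :
    ∃ c₁ c₂ : ℝ, 0 < c₁ ∧ c₁ ≤ c₂ ∧ ∀ v ∈ s, c₁ ≤ f v ∧ f v ≤ c₂ := by
  obtain ⟨v₀, hv₀, hmin⟩ := hs.exists_isMinOn hne hf
  obtain ⟨v₁, hv₁, hmax⟩ := hs.exists_isMaxOn hne hf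
  exact ⟨f v₀, f v₁, hpos v₀ hv₀, hmin hv₁, fun v hv => ⟨hmin hv, hmax hv⟩⟩

theorem tan_mem_Icc_of_mem_Icc_arctan {a b s : ℝ} (k : ℤ)
    (hs : s ∈ Icc (π * k + arctan a) (π * k + arctan b)) : tan s ∈ Icc a b := by
  have hu : s - k * π ∈ Ioo (-(π / 2)) (π / 2) :=
    ⟨by linarith [neg_pi_div_two_lt_arctan a, hs.1], by linarith [arctan_lt_pi_div_two b, hs.2]⟩
  rw [← tan_sub_int_mul_pi s k]
  constructor <;> rw [← arctan_strictMono.le_iff_le, arctan_tan hu.1 hu.2] <;> linarith [hs.1, hs.2]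

theorem cos_ne_zero_of_tan_ne_zero {s : ℝ} (h : tan s ≠ 0) : cos s ≠ 0 := fun hc =>
  h (by rw [tan_eq_sin_div_cos, hc, div_zero])

theorem hasDerivAt_tan_log {y : ℝ} (hy : 0 < y) (hT : tan (log y) ≠ 0) :
    HasDerivAt (fun z => tan (log z)) ((1 + tan (log y) ^ 2) / y) y := by
  have hc := cos_ne_zero_of_tan_ne_zero hT
  refine ((hasDerivAt_tan hc).comp y (hasDerivAt_log hy.ne')).congr_deriv ?_
  rw [← inv_one_add_tan_sq hc, one_div, inv_inv, div_eq_mul_inv]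

noncomputable def powTanLog (p θ : ℝ) (F : ℝ → ℝ) (y : ℝ) : ℝ :=
  y ^ p * tan (log y) ^ θ * F (tan (log y))

theorem powTanLog_pos {p θ y : ℝ} {F : ℝ → ℝ} (hy : 0 < y) (hT : 0 < tan (log y))
    (hF : 0 < F (tan (log y))) : 0 < powTanLog p θ F y := by
  rw [powTanLog]
  positivity

theorem hasDerivAt_powTanLog {p θ y F' : ℝ} {F G : ℝ → ℝ} (hy : 0 < y) (hT : 0 < tan (log y))
    (hF : HasDerivAt F F' (tan (log y)))
    (hG : (p + θ * (tan (log y) + (tan (log y))⁻¹)) * F (tan (log y))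
      + (1 + tan (log y) ^ 2) * F' = G (tan (log y))) :
    HasDerivAt (powTanLog p θ F) (powTanLog (p - 1) θ G y) y := by
  have hL := hasDerivAt_tan_log hy hT.ne'
  have h := ((hasDerivAt_rpow_const (p := p) (Or.inl hy.ne')).mul
    (hL.rpow_const (p := θ) (Or.inl hT.ne'))).mul (hF.comp y hL)
  refine h.congr_deriv ?_
  have hy' : y ^ p = y ^ (p - 1) * y := by rw [← rpow_add_one hy.ne', sub_add_cancel]
  have hT' : tan (log y) ^ θ = tan (log y) ^ (θ - 1) * tan (log y) := by
    rw [← rpow_add_one hT.ne', sub_add_cancel]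
  simp only [Pi.mul_apply, Function.comp_apply]
  rw [powTanLog, ← hG, hy', hT']
  field_simp
  ring

noncomputable def g₁ (c θ v : ℝ) : ℝ := c + θ * (v + v⁻¹)

noncomputable def g₂ (c θ v : ℝ) : ℝ := g₁ c θ v ^ 2 - g₁ c θ v + θ * (v ^ 2 - v⁻¹ ^ 2)

noncomputable def g₃ (c θ v : ℝ) : ℝ :=
  (g₁ c θ v - 2) * g₂ c θ v + (2 * g₁ c θ v - 1) * θ * (v ^ 2 - v⁻¹ ^ 2)
    + θ * ((1 + v ^ 2) * (2 * v + 2 * v⁻¹ ^ 3))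

section Derivatives

variable {c θ : ℝ}

theorem hasDerivAt_g₁ {v : ℝ} (hv : v ≠ 0) : HasDerivAt (g₁ c θ) (θ * (1 - v⁻¹ ^ 2)) v := by
  have h := ((hasDerivAt_id v).add ((hasDerivAt_id v).inv hv)).const_mul θ |>.const_add c
  refine h.congr_deriv ?_
  simp only [id_eq]
  field_simp
  ring

theorem hasDerivAt_g₂ {v : ℝ} (hv : v ≠ 0) :
    HasDerivAt (g₂ c θ)
      ((2 * g₁ c θ v - 1) * (θ * (1 - v⁻¹ ^ 2)) + θ * (2 * v + 2 * v⁻¹ ^ 3)) v := by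
  have h₁ := hasDerivAt_g₁ (c := c) (θ := θ) hv
  have h := ((h₁.pow 2).sub h₁).add ((((hasDerivAt_id v).pow 2).sub
    (((hasDerivAt_id v).inv hv).pow 2)).const_mul θ)
  refine h.congr_deriv ?_
  simp only [id_eq, Pi.inv_apply, Nat.cast_ofNat, Nat.reduceSub, pow_one]
  field_simp
  ring

theorem hasDerivAt_g {y : ℝ} (hy : 0 < y) (hT : 0 < tan (log y)) :
    HasDerivAt (g c θ) (powTanLog (c - 1) θ (g₁ c θ) y) y := by
  have h : g c θ = powTanLog c θ fun _ => 1 := by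
    funext z
    rw [g, powTanLog, mul_one]
  rw [h]
  exact hasDerivAt_powTanLog hy hT (hasDerivAt_const _ _) (by rw [g₁]; ring)

theorem hasDerivAt_powTanLog_g₁ {y : ℝ} (hy : 0 < y) (hT : 0 < tan (log y)) :
    HasDerivAt (powTanLog (c - 1) θ (g₁ c θ)) (powTanLog (c - 2) θ (g₂ c θ) y) y := by
  have h := hasDerivAt_powTanLog (p := c - 1) (θ := θ) (G := g₂ c θ) hy hT
    (hasDerivAt_g₁ hT.ne') (by rw [g₂, g₁]; field_simp; ring)
  rwa [show c - 1 - 1 = c - 2 by ring] at h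

theorem hasDerivAt_powTanLog_g₂ {y : ℝ} (hy : 0 < y) (hT : 0 < tan (log y)) :
    HasDerivAt (powTanLog (c - 2) θ (g₂ c θ)) (powTanLog (c - 3) θ (g₃ c θ) y) y := by
  have h := hasDerivAt_powTanLog (p := c - 2) (θ := θ) (G := g₃ c θ) hy hT
    (hasDerivAt_g₂ hT.ne') (by rw [g₃, g₁]; field_simp; ring)
  rwa [show c - 2 - 1 = c - 3 by ring] at h

end Derivatives

noncomputable def thirdDerivRatio (c θ v : ℝ) : ℝ :=
  (3 * g₂ c θ v ^ 2 - g₁ c θ v * g₃ c θ v) / (g₁ c θ v ^ 5 * v ^ (θ / c))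

section Ratio

variable {c θ : ℝ}

theorem g_pos {y : ℝ} (hy : 0 < y) (hT : 0 < tan (log y)) : 0 < g c θ y := by
  rw [g]
  positivity

theorem g₁_pos (hc : 0 < c) (hθ : 0 ≤ θ) {v : ℝ} (hv : 0 < v) : 0 < g₁ c θ v := by
  rw [g₁]
  positivity

theorem inverse_third_deriv_eq {y : ℝ} (hc : c ≠ 0) (hy : 0 < y) (hT : 0 < tan (log y))
    (h₁ : g₁ c θ (tan (log y)) ≠ 0) :
    (3 * powTanLog (c - 2) θ (g₂ c θ) y ^ 2
        - powTanLog (c - 1) θ (g₁ c θ) y * powTanLog (c - 3) θ (g₃ c θ) y)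
      / powTanLog (c - 1) θ (g₁ c θ) y ^ 5
      = thirdDerivRatio c θ (tan (log y)) * g c θ y ^ (1 / c - 3) := by
  have hg := g_pos (c := c) (θ := θ) hy hT
  have hsub : ∀ (q : ℝ) (F : ℝ → ℝ),
      powTanLog (c - q) θ F y = g c θ y / y ^ q * F (tan (log y)) := fun q F => by
    rw [powTanLog, g, rpow_sub hy]
    ring
  have hroot : g c θ y ^ (1 / c) = y * tan (log y) ^ (θ / c) := by
    rw [g, mul_rpow (rpow_nonneg hy.le c) (rpow_nonneg hT.le θ), one_div, rpow_rpow_inv hy.le hc,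
      ← rpow_mul hT.le, div_eq_mul_inv]
  have := rpow_pos_of_pos hT (θ / c)
  rw [hsub, hsub, hsub, rpow_sub hg, hroot, thirdDerivRatio]
  simp only [rpow_one, rpow_ofNat]
  field_simp

theorem one_add_two_mul_le_g₁ (hc : 1 ≤ c) (hθ : 0 ≤ θ) {v : ℝ} (hv : 0 < v) :
    1 + 2 * θ ≤ g₁ c θ v := by
  have : 2 ≤ v + v⁻¹ := by
    have := mul_inv_cancel₀ hv.ne'
    nlinarith [sq_nonneg (v - 1), inv_pos.2 hv]
  rw [g₁]
  nlinarith

theorem thirdDerivRatio_numerator_pos (hc : 1 ≤ c) (hθ : 1 < θ) {v : ℝ} (hv : v ∈ Icc (1 : ℝ) 2) :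
    0 < 3 * g₂ c θ v ^ 2 - g₁ c θ v * g₃ c θ v := by
  obtain ⟨hv₁, hv₂⟩ := hv
  set a := g₁ c θ v
  set s₁ := v ^ 2 - v⁻¹ ^ 2
  set s₂ := (1 + v ^ 2) * (2 * v + 2 * v⁻¹ ^ 3)
  have key : 3 * g₂ c θ v ^ 2 - a * g₃ c θ v
      = a * (a * (a - 1) * (2 * a - 1) - θ * s₂) + 3 * θ * s₁ * g₂ c θ v := by
    rw [g₃, g₂]
    ring
  have ha : 1 + 2 * θ ≤ a := one_add_two_mul_le_g₁ hc (by linarith) (by linarith)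
  have hinv : v⁻¹ ≤ 1 := inv_le_one_of_one_le₀ hv₁
  have hinv₀ : 0 < v⁻¹ := by positivity
  have hs₁ : 0 ≤ s₁ := by nlinarith
  have hs₂ : s₂ ≤ 30 := by
    have : v⁻¹ ^ 3 ≤ 1 := pow_le_one₀ hinv₀.le hinv
    have : 2 * v + 2 * v⁻¹ ^ 3 ≤ 6 := by linarith
    have : 1 + v ^ 2 ≤ 5 := by nlinarith
    nlinarith [pow_pos hinv₀ 3]
  have hg₂ : 0 ≤ g₂ c θ v := by
    have : 0 ≤ a ^ 2 - a := by nlinarith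
    have : 0 ≤ θ * s₁ := by positivity
    rw [g₂]
    linarith
  have hcubic : 30 * θ < a * (a - 1) * (2 * a - 1) := by
    have h₁ : 6 * θ < a * (a - 1) := by nlinarith
    nlinarith
  have : θ * s₂ ≤ 30 * θ := by nlinarith
  rw [key]
  have : 0 ≤ 3 * θ * s₁ * g₂ c θ v := by positivity
  have : 0 < a * (a * (a - 1) * (2 * a - 1) - θ * s₂) := mul_pos (by linarith) (by linarith)
  linarith

theorem continuousOn_thirdDerivRatio (hc : 0 < c) (hθ : 0 ≤ θ) :
    ContinuousOn (thirdDerivRatio c θ) (Ioi 0) := by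
  refine continuousOn_of_forall_continuousAt fun v (hv : 0 < v) => ?_
  have h₁ := (g₁_pos hc hθ hv).ne'
  have : ContinuousAt (g₁ c θ) v := by
    unfold g₁
    fun_prop (disch := positivity)
  unfold thirdDerivRatio g₃ g₂
  fun_prop (disch := positivity)

theorem thirdDerivRatio_pos (hc : 1 ≤ c) (hθ : 1 < θ) {v : ℝ} (hv : v ∈ Icc (1 : ℝ) 2) :
    0 < thirdDerivRatio c θ v := by
  have hv₀ : 0 < v := one_pos.trans_le hv.1
  have := g₁_pos (by linarith) (by linarith) hv₀ (c := c) (θ := θ)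
  exact div_pos (thirdDerivRatio_numerator_pos hc hθ hv) (by positivity)

end Ratio

section Inverse

variable {c θ x : ℝ}

theorem tan_log_mem_Icc {y : ℝ} (hy : y ∈ Icc (Δ₁ x) (Δ₂ x)) : 0 < y ∧ tan (log y) ∈ Icc 1 2 := by
  have hy₀ : 0 < y := (exp_pos _).trans_le hy.1
  refine ⟨hy₀, tan_mem_Icc_of_mem_Icc_arctan ⌊log x / π⌋ ⟨?_, ?_⟩⟩
  · rw [← log_exp (π * _ + arctan 1)]
    exact log_le_log (exp_pos _) hy.1
  · rw [← log_exp (π * _ + arctan 2)]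
    exact log_le_log hy₀ hy.2

theorem strictMonoOn_g (hc : 0 < c) (hθ : 0 ≤ θ) (x : ℝ) :
    StrictMonoOn (g c θ) (Icc (Δ₁ x) (Δ₂ x)) := by
  have hd : ∀ y ∈ Icc (Δ₁ x) (Δ₂ x),
      HasDerivAt (g c θ) (powTanLog (c - 1) θ (g₁ c θ) y) y ∧
        0 < powTanLog (c - 1) θ (g₁ c θ) y := fun y hy => by
    obtain ⟨hy₀, hT⟩ := tan_log_mem_Icc hy
    have hT₀ : 0 < tan (log y) := one_pos.trans_le hT.1
    exact ⟨hasDerivAt_g hy₀ hT₀, powTanLog_pos hy₀ hT₀ (g₁_pos hc hθ hT₀)⟩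
  refine strictMonoOn_of_deriv_pos (convex_Icc _ _)
    (fun y hy => (hd y hy).1.continuousAt.continuousWithinAt) fun y hy => ?_
  rw [interior_Icc] at hy
  rw [(hd y (Ioo_subset_Icc_self hy)).1.deriv]
  exact (hd y (Ioo_subset_Icc_self hy)).2

theorem hasDerivAt_deriv_deriv_of_g_rightInvOn {m : ℝ → ℝ} (hc : 0 < c) (hθ : 0 ≤ θ)
    (hm : ∀ t ∈ Icc (g c θ (Δ₁ x)) (g c θ (Δ₂ x)), m t ∈ Icc (Δ₁ x) (Δ₂ x) ∧ g c θ (m t) = t)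
    {t : ℝ} (ht : t ∈ Ioo (g c θ (Δ₁ x)) (g c θ (Δ₂ x))) :
    DifferentiableAt ℝ m t ∧ DifferentiableAt ℝ (deriv m) t ∧
      HasDerivAt (deriv (deriv m)) (thirdDerivRatio c θ (tan (log (m t))) * t ^ (1 / c - 3)) t := by
  have hmem : ∀ s ∈ Ioo (g c θ (Δ₁ x)) (g c θ (Δ₂ x)), 0 < m s ∧ 0 < tan (log (m s)) :=
    fun s hs =>
      have h := tan_log_mem_Icc (hm s (Ioo_subset_Icc_self hs)).1
      ⟨h.1, one_pos.trans_le h.2.1⟩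
  obtain ⟨d₁, d₂, d₃⟩ := hasDerivAt_deriv_deriv_of_rightInvOn isOpen_Ioo
    (fun s hs => (strictMonoOn_g hc hθ x).continuousAt_of_rightInvOn (fun s hs => (hm s hs).1)
      (fun s hs => (hm s hs).2) hs)
    (fun s hs => (hm s (Ioo_subset_Icc_self hs)).2)
    (fun s hs => hasDerivAt_g (hmem s hs).1 (hmem s hs).2)
    (fun s hs => hasDerivAt_powTanLog_g₁ (hmem s hs).1 (hmem s hs).2)
    (fun s hs => hasDerivAt_powTanLog_g₂ (hmem s hs).1 (hmem s hs).2)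
    (fun s hs => (powTanLog_pos (hmem s hs).1 (hmem s hs).2 (g₁_pos hc hθ (hmem s hs).2)).ne')
    ht
  refine ⟨d₁.differentiableAt, d₂.differentiableAt, ?_⟩
  rwa [inverse_third_deriv_eq hc.ne' (hmem t ht).1 (hmem t ht).2 (g₁_pos hc hθ (hmem t ht).2).ne',
    (hm t (Ioo_subset_Icc_self ht)).2] at d₃

end Inverse

theorem stmt_6_general (c θ : ℝ) (hc₁ : 1 < c) (hθ : 1 < θ)
    (m : ℝ → ℝ → ℝ)
    (hm : ∀ x : ℝ, 2 ≤ x → ∀ t ∈ Set.Icc (g c θ (Δ₁ x)) (g c θ (Δ₂ x)),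
      m x t ∈ Set.Icc (Δ₁ x) (Δ₂ x) ∧ g c θ (m x t) = t) :
    ∃ c₁ c₂ : ℝ, 0 < c₁ ∧ c₁ ≤ c₂ ∧
      ∀ x : ℝ, 2 ≤ x → ∀ t ∈ Set.Ioo (g c θ (Δ₁ x)) (g c θ (Δ₂ x)),
        (DifferentiableAt ℝ (m x) t ∧ DifferentiableAt ℝ (deriv (m x)) t ∧
            DifferentiableAt ℝ (deriv (deriv (m x))) t) ∧
          c₁ * t ^ (1 / c - 3) ≤ |deriv (deriv (deriv (m x))) t| ∧
          |deriv (deriv (deriv (m x))) t| ≤ c₂ * t ^ (1 / c - 3) := by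
  obtain ⟨c₁, c₂, hc₁₀, hc₁₂, hbounds⟩ := isCompact_Icc.exists_pos_bounds
    (nonempty_Icc.2 one_le_two)
    ((continuousOn_thirdDerivRatio (by linarith) (by linarith)).mono fun v hv =>
      one_pos.trans_le hv.1)
    fun v hv => thirdDerivRatio_pos hc₁.le hθ hv
  refine ⟨c₁, c₂, hc₁₀, hc₁₂, fun x hx t ht => ?_⟩
  obtain ⟨hd₁, hd₂, hd₃⟩ :=
    hasDerivAt_deriv_deriv_of_g_rightInvOn (by linarith) (by linarith) (hm x hx) ht
  obtain ⟨hmt, hgmt⟩ := hm x hx t (Ioo_subset_Icc_self ht)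
  obtain ⟨hy₀, hT⟩ := tan_log_mem_Icc hmt
  obtain ⟨hlow, hup⟩ := hbounds _ hT
  have ht₀ : 0 < t ^ (1 / c - 3) :=
    rpow_pos_of_pos (hgmt ▸ g_pos hy₀ (one_pos.trans_le hT.1)) _
  rw [hd₃.deriv, abs_of_pos (mul_pos (hc₁₀.trans_le hlow) ht₀)]
  exact ⟨⟨hd₁, hd₂, hd₃.differentiableAt⟩, mul_le_mul_of_nonneg_right hlow ht₀.le,
    mul_le_mul_of_nonneg_right hup ht₀.le⟩

theorem stmt_6 (c θ : ℝ) (hc₁ : 1 < c) (hc₂ : c < 12 / 11) (hθ : 1 < θ)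
    (m : ℝ → ℝ → ℝ)
    (hm : ∀ x : ℝ, 2 ≤ x → ∀ t ∈ Set.Icc (g c θ (Δ₁ x)) (g c θ (Δ₂ x)),
      m x t ∈ Set.Icc (Δ₁ x) (Δ₂ x) ∧ g c θ (m x t) = t) :
    ∃ c₁ c₂ : ℝ, 0 < c₁ ∧ c₁ ≤ c₂ ∧
      ∀ x : ℝ, 2 ≤ x → ∀ t ∈ Set.Ioo (g c θ (Δ₁ x)) (g c θ (Δ₂ x)),
        (DifferentiableAt ℝ (m x) t ∧ DifferentiableAt ℝ (deriv (m x)) t ∧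
            DifferentiableAt ℝ (deriv (deriv (m x))) t) ∧
          c₁ * t ^ (1 / c - 3) ≤ |deriv (deriv (deriv (m x))) t| ∧
          |deriv (deriv (deriv (m x))) t| ≤ c₂ * t ^ (1 / c - 3) :=
  stmt_6_general c θ hc₁ hθ m hm
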